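/- In the S-machine 𝕊, if an admissible word W belongs to the domain of h², where h is a cyclically reduced word over 𝕊, then W belongs to the domain of hˢ for every integer s. -/
import Mathlib


open scoped Classical

noncomputable section

namespace OlshanskiiSapir

/-- A word over `γ` is (freely) reduced if it has no adjacent pair of mutually
inverse letters. -/
def IsRedWord {γ : Type} (l : List (γ × Bool)) : Prop :=
  List.Chain' (fun a b => ¬(a.1 = b.1 ∧ b.2 = !a.2)) l

/-- `l^k` as a word (concatenation of `k` copies of `l`). -/
def wordPow {γ : Type} (l : List (γ × Bool)) : ℕ → List (γ × Bool)
  | 0 => []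
  | k + 1 => l ++ wordPow l k

/-- The formal inverse of a word. -/
def wordInv {γ : Type} (l : List (γ × Bool)) : List (γ × Bool) :=
  (l.map fun p => (p.1, !p.2)).reverse

/-- `l^s` as a word, for `s : ℤ`. -/
def zpowWord {γ : Type} (l : List (γ × Bool)) : ℤ → List (γ × Bool)
  | Int.ofNat k => wordPow l k
  | Int.negSucc k => wordInv (wordPow l (k + 1))

/-- One step of an `S`-machine applied to an admissible word.  The state
consists of the common `Ω`-coordinate of its `K`-letters together with the
contents of its sectors (elements of the free Burnside groups `B i`).  A rule
`τ` is applicable iff the `Ω`-coordinate equals `src τ` and every sector locked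
by `τ` is empty; it changes the `Ω`-coordinate to `tgt τ` and multiplies the
content of each unlocked sector on the left by `(Rw τ i)⁻¹` and on the right by
`Lw τ i`.  The inverse letter `(τ, false)` acts by the inverse partial map. -/
def mstep {S Ω I : Type} {B : I → Type} [∀ i, Group (B i)]
    (src tgt : S → Ω) (lock : S → I → Prop) (Lw Rw : (τ : S) → (i : I) → B i)
    (a : S × Bool) (x : Ω × ∀ i, B i) : Option (Ω × ∀ i, B i) :=
  match a with
  | (τ, true) =>
      if x.1 = src τ ∧ ∀ i, lock τ i → x.2 i = 1 then
        some (tgt τ, fun i => if lock τ i then x.2 i else (Rw τ i)⁻¹ * x.2 i * Lw τ i)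
      else none
  | (τ, false) =>
      if x.1 = tgt τ ∧ ∀ i, lock τ i → x.2 i = 1 then
        some (src τ, fun i => if lock τ i then x.2 i else Rw τ i * x.2 i * (Lw τ i)⁻¹)
      else none

/-- The partial transformation of admissible words induced by a word over the
rules of the `S`-machine and their inverses. -/
def mrun {S Ω I : Type} {B : I → Type} [∀ i, Group (B i)]
    (src tgt : S → Ω) (lock : S → I → Prop) (Lw Rw : (τ : S) → (i : I) → B i)
    (l : List (S × Bool)) (x : Ω × ∀ i, B i) : Option (Ω × ∀ i, B i) :=
  l.foldlM (fun y a => mstep src tgt lock Lw Rw a y) x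

section Statement16Aux

variable {S Ω I : Type} {B : I → Type} [∀ i, Group (B i)]
    (src tgt : S → Ω) (lock : S → I → Prop) (Lw Rw : (τ : S) → (i : I) → B i)

def rlet (a : S × Bool) (i : I) : B i :=
  if lock a.1 i then 1 else (if a.2 then Rw a.1 i else (Rw a.1 i)⁻¹)

def llet (a : S × Bool) (i : I) : B i :=
  if lock a.1 i then 1 else (if a.2 then Lw a.1 i else (Lw a.1 i)⁻¹)

def omg0 (a : S × Bool) : Ω := if a.2 then src a.1 else tgt a.1

def omg1 (a : S × Bool) : Ω := if a.2 then tgt a.1 else src a.1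

lemma mstep_spec {a : S × Bool} {u u' : Ω × ∀ i, B i}
    (hs : mstep src tgt lock Lw Rw a u = some u') :
    u.1 = omg0 src tgt a ∧ u'.1 = omg1 src tgt a ∧ (∀ i, lock a.1 i → u.2 i = 1) ∧
      ∀ i, u'.2 i = (rlet lock Rw a i)⁻¹ * u.2 i * llet lock Lw a i := by
  obtain ⟨τ, b⟩ := a
  cases b
  · simp only [mstep] at hs
    split at hs
    · rename_i hcond
      rw [Option.some_inj] at hs
      subst hs
      refine ⟨by simpa [omg0] using hcond.1, by simp [omg1], hcond.2, fun i => ?_⟩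
      by_cases hli : lock τ i
      · simp [rlet, llet, hli]
      · simp only [rlet, llet, hli, if_false, Bool.cond_false]
        simp

    · exact absurd hs (by simp)
  · simp only [mstep] at hs
    split at hs
    · rename_i hcond
      rw [Option.some_inj] at hs
      subst hs
      refine ⟨by simpa [omg0] using hcond.1, by simp [omg1], hcond.2, fun i => ?_⟩
      by_cases hli : lock τ i
      · simp [rlet, llet, hli]
      · simp only [rlet, llet, hli, if_false]
        simp
    · exact absurd hs (by simp)

lemma mstep_mk {a : S × Bool} {u : Ω × ∀ i, B i}
    (hc : u.1 = omg0 src tgt a) (hl : ∀ i, lock a.1 i → u.2 i = 1) :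
    mstep src tgt lock Lw Rw a u =
      some (omg1 src tgt a, fun i => (rlet lock Rw a i)⁻¹ * u.2 i * llet lock Lw a i) := by
  obtain ⟨τ, b⟩ := a
  cases b
  · simp only [mstep]
    rw [if_pos ⟨by simpa [omg0] using hc, hl⟩]
    refine congrArg some (Prod.ext (by simp [omg1]) (funext fun i => ?_))
    by_cases hli : lock τ i
    · simp [rlet, llet, hli, hl i hli]
    · simp [rlet, llet, hli]
  · simp only [mstep]
    rw [if_pos ⟨by simpa [omg0] using hc, hl⟩]
    refine congrArg some (Prod.ext (by simp [omg1]) (funext fun i => ?_))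
    by_cases hli : lock τ i
    · simp [rlet, llet, hli, hl i hli]
    · simp [rlet, llet, hli]

lemma mrun_nil (x : Ω × ∀ i, B i) : mrun src tgt lock Lw Rw [] x = some x := rfl

lemma mrun_cons (a : S × Bool) (l : List (S × Bool)) (x : Ω × ∀ i, B i) :
    mrun src tgt lock Lw Rw (a :: l) x =
      (mstep src tgt lock Lw Rw a x).bind (mrun src tgt lock Lw Rw l) := by
  cases hs : mstep src tgt lock Lw Rw a x <;>
    simp [mrun, List.foldlM_cons, hs, Option.bind]

lemma mrun_append (l l' : List (S × Bool)) (x : Ω × ∀ i, B i) :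
    mrun src tgt lock Lw Rw (l ++ l') x =
      (mrun src tgt lock Lw Rw l x).bind (mrun src tgt lock Lw Rw l') := by
  cases hs : mrun src tgt lock Lw Rw l x with
  | none =>
      have hs' : List.foldlM (fun y a => mstep src tgt lock Lw Rw a y) x l = none := hs
      simp [mrun, List.foldlM_append, hs', hs, Option.bind]
  | some y =>
      have hs' : List.foldlM (fun y a => mstep src tgt lock Lw Rw a y) x l = some y := hs
      simp [mrun, List.foldlM_append, hs', hs, Option.bind]

def rP (l : List (S × Bool)) (i : I) : B i := (l.map fun a => rlet lock Rw a i).prod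
def lP (l : List (S × Bool)) (i : I) : B i := (l.map fun a => llet lock Lw a i).prod

lemma mrun_sect {l : List (S × Bool)} {u u' : Ω × ∀ i, B i}
    (hr : mrun src tgt lock Lw Rw l u = some u') (i : I) :
    u'.2 i = (rP lock Rw l i)⁻¹ * u.2 i * lP lock Lw l i := by
  induction l generalizing u with
  | nil =>
      rw [mrun_nil, Option.some_inj] at hr
      subst hr; simp [rP, lP]
  | cons a t ih =>
      rw [mrun_cons] at hr
      cases hs : mstep src tgt lock Lw Rw a u with
      | none => rw [hs] at hr; simp at hr
      | some u₁ =>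
          rw [hs] at hr
          simp only [Option.bind] at hr
          have h1 := (mstep_spec src tgt lock Lw Rw hs).2.2.2 i
          rw [ih hr, h1]
          simp only [rP, lP, List.map_cons, List.prod_cons, mul_inv_rev]
          group

lemma mrun_omega {l : List (S × Bool)} {u v u' v' : Ω × ∀ i, B i}
    (h0 : u.1 = v.1)
    (hu : mrun src tgt lock Lw Rw l u = some u')
    (hv : mrun src tgt lock Lw Rw l v = some v') : u'.1 = v'.1 := by
  induction l generalizing u v with
  | nil =>
      rw [mrun_nil, Option.some_inj] at hu hv
      subst hu; subst hv; exact h0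
  | cons a t ih =>
      rw [mrun_cons] at hu hv
      cases hsu : mstep src tgt lock Lw Rw a u with
      | none => rw [hsu] at hu; simp at hu
      | some u₁ =>
        cases hsv : mstep src tgt lock Lw Rw a v with
        | none => rw [hsv] at hv; simp at hv
        | some v₁ =>
            rw [hsu] at hu; rw [hsv] at hv
            simp only [Option.bind] at hu hv
            exact ih ((mstep_spec src tgt lock Lw Rw hsu).2.1.trans
              (mstep_spec src tgt lock Lw Rw hsv).2.1.symm) hu hv

lemma mrun_head {a : S × Bool} {t : List (S × Bool)} {u u' : Ω × ∀ i, B i}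
    (hr : mrun src tgt lock Lw Rw (a :: t) u = some u') : u.1 = omg0 src tgt a := by
  rw [mrun_cons] at hr
  cases hs : mstep src tgt lock Lw Rw a u with
  | none => rw [hs] at hr; simp at hr
  | some u₁ => exact (mstep_spec src tgt lock Lw Rw hs).1

def Inv3 (u v w : Ω × ∀ i, B i) : Prop :=
  v.1 = w.1 ∧ ∃ A C : ∀ i, B i,
    ∀ i, v.2 i = A i * u.2 i * C i ∧ w.2 i = A i * v.2 i * C i

lemma mstep_trans {a : S × Bool} {u v w u' v' : Ω × ∀ i, B i}
    (hI : Inv3 u v w)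
    (hu : mstep src tgt lock Lw Rw a u = some u')
    (hv : mstep src tgt lock Lw Rw a v = some v') :
    ∃ w', mstep src tgt lock Lw Rw a w = some w' ∧ Inv3 u' v' w' := by
  obtain ⟨hvw, A, C, hAC⟩ := hI
  obtain ⟨hu0, hu1, hul, hus⟩ := mstep_spec src tgt lock Lw Rw hu
  obtain ⟨hv0, hv1, hvl, hvs⟩ := mstep_spec src tgt lock Lw Rw hv
  have hACone : ∀ i, lock a.1 i → A i * C i = 1 := by
    intro i hi
    have h2 := (hAC i).1
    rw [hul i hi, hvl i hi] at h2
    simpa using h2.symm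
  have hwl : ∀ i, lock a.1 i → w.2 i = 1 := by
    intro i hi
    rw [(hAC i).2, hvl i hi]
    simpa using hACone i hi
  have hw := mstep_mk src tgt lock Lw Rw (a := a) (u := w) (hvw ▸ hv0) hwl
  refine ⟨_, hw, ?_, fun i => (rlet lock Rw a i)⁻¹ * A i * rlet lock Rw a i,
    fun i => (llet lock Lw a i)⁻¹ * C i * llet lock Lw a i, fun i => ?_⟩
  · simpa using hv1
  · dsimp only
    constructor
    · rw [hvs i, hus i, (hAC i).1]; group
    · rw [hvs i, (hAC i).2]; group

lemma mrun_trans {l : List (S × Bool)} {u v w u' v' : Ω × ∀ i, B i}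
    (hI : Inv3 u v w)
    (hu : mrun src tgt lock Lw Rw l u = some u')
    (hv : mrun src tgt lock Lw Rw l v = some v') :
    ∃ w', mrun src tgt lock Lw Rw l w = some w' ∧ Inv3 u' v' w' := by
  induction l generalizing u v w with
  | nil =>
      rw [mrun_nil, Option.some_inj] at hu hv
      subst hu; subst hv
      exact ⟨w, mrun_nil _ _ _ _ _ _, hI⟩
  | cons a t ih =>
      rw [mrun_cons] at hu hv
      cases hsu : mstep src tgt lock Lw Rw a u with
      | none => rw [hsu] at hu; simp at hu
      | some u₁ =>
        cases hsv : mstep src tgt lock Lw Rw a v with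
        | none => rw [hsv] at hv; simp at hv
        | some v₁ =>
            rw [hsu] at hu; rw [hsv] at hv
            simp only [Option.bind] at hu hv
            obtain ⟨w₁, hsw, hI₁⟩ := mstep_trans src tgt lock Lw Rw hI hsu hsv
            obtain ⟨w', hrw, hI'⟩ := ih hI₁ hu hv
            exact ⟨w', by rw [mrun_cons, hsw]; exact hrw, hI'⟩

lemma wordPow_succ' {γ : Type} (l : List (γ × Bool)) (k : ℕ) :
    wordPow l (k + 1) = wordPow l k ++ l := by
  induction k with
  | zero => simp [wordPow]
  | succ m ih =>
      calc wordPow l (m + 1 + 1) = l ++ wordPow l (m + 1) := rfl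
        _ = l ++ (wordPow l m ++ l) := by rw [ih]
        _ = (l ++ wordPow l m) ++ l := (List.append_assoc _ _ _).symm
        _ = wordPow l (m + 1) ++ l := rfl

lemma wordPow_nil {γ : Type} (k : ℕ) : wordPow ([] : List (γ × Bool)) k = [] := by
  induction k with
  | zero => rfl
  | succ m ih => simpa [wordPow] using ih

lemma wordPow_add {γ : Type} (l : List (γ × Bool)) (a b : ℕ) :
    wordPow l (a + b) = wordPow l a ++ wordPow l b := by
  induction a with
  | zero => simp [wordPow]
  | succ m ih =>
      have e1 : m + 1 + b = (m + b) + 1 := by omega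
      rw [e1]
      show l ++ wordPow l (m + b) = wordPow l (m + 1) ++ wordPow l b
      rw [ih]
      show l ++ (wordPow l m ++ wordPow l b) = (l ++ wordPow l m) ++ wordPow l b
      rw [List.append_assoc]

lemma rP_append (l l' : List (S × Bool)) (i : I) :
    rP lock Rw (l ++ l') i = rP lock Rw l i * rP lock Rw l' i := by
  simp [rP]

lemma lP_append (l l' : List (S × Bool)) (i : I) :
    lP lock Lw (l ++ l') i = lP lock Lw l i * lP lock Lw l' i := by
  simp [lP]

lemma rP_pow (l : List (S × Bool)) (k : ℕ) (i : I) :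
    rP lock Rw (wordPow l k) i = (rP lock Rw l i) ^ k := by
  induction k with
  | zero => simp [wordPow, rP]
  | succ m ih =>
      show rP lock Rw (l ++ wordPow l m) i = _
      rw [rP_append, ih, pow_succ']

lemma lP_pow (l : List (S × Bool)) (k : ℕ) (i : I) :
    lP lock Lw (wordPow l k) i = (lP lock Lw l i) ^ k := by
  induction k with
  | zero => simp [wordPow, lP]
  | succ m ih =>
      show lP lock Lw (l ++ wordPow l m) i = _
      rw [lP_append, ih, pow_succ']

lemma mstep_inv {a : S × Bool} {u u' : Ω × ∀ i, B i}
    (hs : mstep src tgt lock Lw Rw a u = some u') :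
    mstep src tgt lock Lw Rw (a.1, !a.2) u' = some u := by
  obtain ⟨τ, b⟩ := a
  cases b
  · simp only [Bool.not_false, Bool.not_true, mstep] at hs ⊢
    split at hs
    · rename_i hcond
      rw [Option.some_inj] at hs
      subst hs
      rw [if_pos ⟨rfl, fun i hi => by simp [hi, hcond.2 i hi]⟩]
      refine congrArg some (Prod.ext (by simpa using hcond.1.symm) (funext fun i => ?_))
      by_cases hli : lock τ i
      · simp [hli]
      · simp [hli]
        group
    · exact absurd hs (by simp)
  · simp only [Bool.not_false, Bool.not_true, mstep] at hs ⊢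
    split at hs
    · rename_i hcond
      rw [Option.some_inj] at hs
      subst hs
      rw [if_pos ⟨rfl, fun i hi => by simp [hi, hcond.2 i hi]⟩]
      refine congrArg some (Prod.ext (by simpa using hcond.1.symm) (funext fun i => ?_))
      by_cases hli : lock τ i
      · simp [hli]
      · simp [hli]
        group
    · exact absurd hs (by simp)

lemma mrun_inv {l : List (S × Bool)} {u u' : Ω × ∀ i, B i}
    (hr : mrun src tgt lock Lw Rw l u = some u') :
    mrun src tgt lock Lw Rw (wordInv l) u' = some u := by
  induction l generalizing u with
  | nil =>
      rw [mrun_nil, Option.some_inj] at hr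
      subst hr; rfl
  | cons a t ih =>
      rw [mrun_cons] at hr
      cases hs : mstep src tgt lock Lw Rw a u with
      | none => rw [hs] at hr; simp at hr
      | some u₁ =>
          rw [hs] at hr
          simp only [Option.bind] at hr
          have hwi : wordInv (a :: t) = wordInv t ++ [(a.1, !a.2)] := by
            simp [wordInv]
          rw [hwi, mrun_append, ih hr]
          show mrun src tgt lock Lw Rw [(a.1, !a.2)] u₁ = some u
          rw [mrun_cons, mstep_inv src tgt lock Lw Rw hs]
          rfl

end Statement16Aux

/-- (Lemma `burns` (iv).)  In the `S`-machine `𝕊` (rules act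
on admissible words sector-wise, each sector content living in a group of odd
exponent `n`): if an admissible word `W` belongs to the domain of `h²` for a
cyclically reduced word `h` over `𝕊`, then `W` belongs to the domain of `hˢ`
for every integer `s`. -/
theorem statement16 {S Ω I : Type} {B : I → Type} [∀ i, Group (B i)]
    (n : ℕ) (hodd : Odd n) (hpos : 0 < n)
    (hexp : ∀ (i : I) (b : B i), b ^ n = 1)
    (src tgt : S → Ω) (lock : S → I → Prop) (Lw Rw : (τ : S) → (i : I) → B i)
    (h : List (S × Bool)) (hcyc : IsRedWord (h ++ h))
    (x : Ω × ∀ i, B i)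
    (hx : (mrun src tgt lock Lw Rw (h ++ h) x).isSome = true) :
    ∀ s : ℤ, (mrun src tgt lock Lw Rw (zpowWord h s) x).isSome = true := by
  intro s
  by_cases hne : h = []
  · subst hne
    have hz : ∀ s : ℤ, zpowWord ([] : List (S × Bool)) s = [] := by
      intro s
      cases s with
      | ofNat k => exact wordPow_nil k
      | negSucc k =>
          show wordInv (wordPow ([] : List (S × Bool)) (k + 1)) = []
          rw [wordPow_nil]; rfl
    rw [hz s, mrun_nil]; rfl
  · obtain ⟨a, t, rfl⟩ := List.exists_cons_of_ne_nil hne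
    set h : List (S × Bool) := a :: t with hh
    -- split the hypothesis run of h ++ h
    obtain ⟨z, hz'⟩ := Option.isSome_iff_exists.mp hx
    rw [mrun_append] at hz'
    cases hy : mrun src tgt lock Lw Rw h x with
    | none => rw [hy] at hz'; simp at hz'
    | some y =>
    rw [hy] at hz'
    simp only [Option.bind] at hz'
    have hz : mrun src tgt lock Lw Rw h y = some z := hz'
    -- Ω-coordinates
    have hx1 : x.1 = omg0 src tgt a := mrun_head src tgt lock Lw Rw hy
    have hy1 : y.1 = omg0 src tgt a := mrun_head src tgt lock Lw Rw hz
    have hyz1 : y.1 = z.1 := mrun_omega src tgt lock Lw Rw (hx1.trans hy1.symm) hy hz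
    -- initial invariant
    have hI : Inv3 x y z :=
      ⟨hyz1, fun i => (rP lock Rw h i)⁻¹, fun i => lP lock Lw h i, fun i =>
        ⟨mrun_sect src tgt lock Lw Rw hy i, mrun_sect src tgt lock Lw Rw hz i⟩⟩
    -- all nonnegative powers are defined, with the invariant propagated
    have key : ∀ m : ℕ, ∃ u v w, mrun src tgt lock Lw Rw (wordPow h m) x = some u ∧
        mrun src tgt lock Lw Rw h u = some v ∧ mrun src tgt lock Lw Rw h v = some w ∧
        Inv3 u v w := by
      intro m
      induction m with
      | zero => exact ⟨x, y, z, mrun_nil _ _ _ _ _ _, hy, hz, hI⟩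
      | succ m ih =>
          obtain ⟨u, v, w, hu, huv, hvw, hIuvw⟩ := ih
          obtain ⟨w', hww', hI'⟩ := mrun_trans src tgt lock Lw Rw hIuvw huv hvw
          refine ⟨v, w, w', ?_, hvw, hww', hI'⟩
          rw [wordPow_succ', mrun_append, hu]
          exact huv
    -- the n-th power fixes x
    have hn : mrun src tgt lock Lw Rw (wordPow h n) x = some x := by
      obtain ⟨u, v, w, hu, huv, _, _⟩ := key n
      have hux : u = x := by
        refine Prod.ext ?_ (funext fun i => ?_)
        · exact (mrun_head src tgt lock Lw Rw huv).trans hx1.symm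
        · have := mrun_sect src tgt lock Lw Rw hu i
          rw [rP_pow, lP_pow, hexp, hexp] at this
          simpa using this
      rw [hux] at hu
      exact hu
    -- iterates of the n-th power fix x
    have hnm : ∀ m : ℕ, mrun src tgt lock Lw Rw (wordPow h (n * m)) x = some x := by
      intro m
      induction m with
      | zero => rw [Nat.mul_zero]; exact mrun_nil _ _ _ _ _ _
      | succ m ih =>
          rw [Nat.mul_succ, wordPow_add, mrun_append, ih]
          exact hn
    cases s with
    | ofNat k =>
        obtain ⟨u, v, w, hu, _, _, _⟩ := key k
        show (mrun src tgt lock Lw Rw (wordPow h k) x).isSome = true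
        rw [hu]; rfl
    | negSucc k =>
        have hle : k + 1 ≤ n * (k + 1) := by nlinarith
        have hd : (n * (k + 1) - (k + 1)) + (k + 1) = n * (k + 1) := Nat.sub_add_cancel hle
        have hsplit : mrun src tgt lock Lw Rw
            (wordPow h (n * (k + 1) - (k + 1)) ++ wordPow h (k + 1)) x = some x := by
          rw [← wordPow_add, hd]; exact hnm (k + 1)
        rw [mrun_append] at hsplit
        cases hq : mrun src tgt lock Lw Rw (wordPow h (n * (k + 1) - (k + 1))) x with
        | none => rw [hq] at hsplit; simp at hsplit
        | some u₀ =>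
        rw [hq] at hsplit
        simp only [Option.bind] at hsplit
        have hinv := mrun_inv src tgt lock Lw Rw hsplit
        show (mrun src tgt lock Lw Rw (wordInv (wordPow h (k + 1))) x).isSome = true
        rw [hinv]; rfl

end OlshanskiiSapir
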